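/- Let B and C be the central binomial and Catalan generating functions, regarded as formal power series over ℝ, and let T_M = B·(C ∘ (zC²)) where ∘ denotes composition of formal power series. Then the coefficients a_n = [z^n]T_M satisfy a_n·√(π n³)/(25/4)^n → 5√15/9 as n → ∞; that is, a_n ∼ (5√15/9)·(1/√(π n³))·(25/4)^n. -/

import Mathlib

open PowerSeries Finset Filter Real

/-- The central binomial generating function `B = ∑ binom(2n,n) zⁿ` over `ℝ`. -/
noncomputable def Bgf : PowerSeries ℝ := PowerSeries.mk fun n => ((2 * n).choose n : ℝ)

/-- The Catalan generating function `C = ∑ Cₙ zⁿ` over `ℝ`. -/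
noncomputable def Cgf : PowerSeries ℝ := PowerSeries.mk fun n => (catalan n : ℝ)

/-- Composition `F ∘ a` of formal power series (intended for `a` with zero constant
term, in which case only the terms with `k ≤ n` contribute to the coefficient of `zⁿ`
in `∑ₖ ([zᵏ]F)·aᵏ`, so the finite sum below is the full composition). -/
noncomputable def PScomp (F a : PowerSeries ℝ) : PowerSeries ℝ :=
  PowerSeries.mk fun n => ∑ k ∈ Finset.range (n + 1),
    PowerSeries.coeff (R := ℝ) k F * PowerSeries.coeff (R := ℝ) n (a ^ k)

/-- `T_M = B·(C ∘ (zC²))`, the generating function for embedded new type trees. -/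
noncomputable def TM : PowerSeries ℝ := Bgf * PScomp Cgf (PowerSeries.X * Cgf ^ 2)

open Topology

/-!
Write `C` for the Catalan series and `D = C ∘ (zC²)`, so that `T_M = B·D`. A solution of
`F = 1 + aF²` yields the square root `1 - 2aF` of `1 - 4a`; thus `1 - 2zC²D = √(5 - 4C)`
(as `zC² = C - 1`), and with `u = z(5 + 4C)/16` one has `(5 - 4C)(1 - 4u) = 1 - 25z/4`. Hence
`√(5 - 4C) = √(1 - 25z/4) / √(1 - 4u)`: the singularity `z = 4/25` of `T_M` is carried by
`√(1 - 25z/4) = 1 - (25/8)z·C(25z/16)`, while `u` and `C` are still analytic on `|z| ≤ 1/5`.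
This turns `T_M` into `W·C(25z/16) - V` with `W`, `V` absolutely convergent on `|z| ≤ 1/5`.
Since `[zⁿ] C(25z/16) = (25/16)ⁿ Cₙ ~ (25/4)ⁿ/√(π n³)`, dominated convergence gives
`[zⁿ] T_M ~ W(4/25)·(25/4)ⁿ/√(π n³)`, and `W(4/25) = 5√15/9`.
-/

theorem PScomp_eq_subst {a : ℝ⟦X⟧} (ha : constantCoeff a = 0) (F : ℝ⟦X⟧) :
    PScomp F a = F.subst a := by
  ext n
  rw [coeff_subst' (HasSubst.of_constantCoeff_zero' ha),
    finsum_eq_sum_of_support_subset (s := range (n + 1))]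
  · simp [PScomp]
  · refine fun d hd => Finset.mem_coe.2 (Finset.mem_range.2 ?_)
    by_contra! h
    exact hd (by simp only [coeff_of_lt_order n ((Nat.cast_lt.2 (by omega : n < d)).trans_le
      (le_order_pow_of_constantCoeff_eq_zero d ha)), smul_zero])

theorem Cgf_eq_map_catalanSeries :
    Cgf = PowerSeries.map (Nat.castRingHom ℝ) catalanSeries := by
  ext n
  simp [Cgf]

theorem Cgf_eq : Cgf = 1 + X * Cgf ^ 2 := by
  have h := congrArg (PowerSeries.map (Nat.castRingHom ℝ)) catalanSeries_sq_mul_X_add_one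
  rw [map_add, map_mul, map_pow, map_X, map_one, ← Cgf_eq_map_catalanSeries] at h
  linear_combination -h

theorem subst_Cgf_eq {a : ℝ⟦X⟧} (ha : constantCoeff a = 0) :
    Cgf.subst a = 1 + a * Cgf.subst a ^ 2 := by
  have hs := HasSubst.of_constantCoeff_zero' ha
  conv_lhs => rw [Cgf_eq]
  rw [← coe_substAlgHom hs, map_add, map_one, map_mul, map_pow, coe_substAlgHom hs, subst_X hs]

theorem Bgf_eq_derivative : Bgf = d⁄dX ℝ (X * Cgf) := by
  ext n
  rw [coeff_derivative, coeff_succ_X_mul]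
  have h := succ_mul_catalan_eq_centralBinom n
  rw [Nat.centralBinom_eq_two_mul_choose] at h
  simp only [Bgf, Cgf, coeff_mk, ← h]
  push_cast
  ring

theorem Bgf_eq : Bgf = 1 + X * (2 * Cgf) * Bgf := by
  have h := congrArg (d⁄dX ℝ)
    (show X * Cgf = X + (X * Cgf) ^ 2 by linear_combination X * Cgf_eq)
  rw [map_add, derivative_X, pow_two, Derivation.leibniz (d⁄dX ℝ) (X * Cgf) (X * Cgf),
    ← Bgf_eq_derivative] at h
  simp only [smul_eq_mul] at h
  linear_combination h

theorem Cgf_mul_one_sub_X_mul_Cgf : Cgf * (1 - X * Cgf) = 1 := by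
  linear_combination Cgf_eq

theorem Bgf_add_one_mul_Cgf : (Bgf + 1) * Cgf = 2 * Bgf := by
  linear_combination -Cgf * Bgf_eq + 2 * Bgf * Cgf_eq

theorem one_sub_two_mul_mul_sq {R : Type*} [CommRing R] {a s : R} (h : s = 1 + a * s ^ 2) :
    (1 - 2 * a * s) ^ 2 = 1 - 4 * a := by
  linear_combination (-4 * a) * h

theorem PowerSeries.eq_of_sq_eq_of_constantCoeff_eq_one {R : Type*} [CommRing R] [IsDomain R]
    [NeZero (2 : R)] {s t : R⟦X⟧} (h : s ^ 2 = t ^ 2) (hs : constantCoeff s = 1)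
    (ht : constantCoeff t = 1) : s = t := by
  refine (sq_eq_sq_iff_eq_or_eq_neg.1 h).resolve_right fun hst => two_ne_zero (α := R) ?_
  have := congrArg constantCoeff hst
  rw [map_neg, hs, ht] at this
  linear_combination this


section WeightedL1

variable {ρ : ℝ}

noncomputable def partialL1 (ρ : ℝ) (f : ℝ⟦X⟧) (N : ℕ) : ℝ :=
  ∑ n ∈ range N, |coeff n f * ρ ^ n|

/-- `∑ₙ |fₙ ρⁿ| ≤ M`, stated through partial sums so that it can be proved by induction on the
number of terms. -/
def L1Le (ρ : ℝ) (f : ℝ⟦X⟧) (M : ℝ) : Prop := ∀ N, partialL1 ρ f N ≤ M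

theorem partialL1_nonneg (f : ℝ⟦X⟧) (N : ℕ) : 0 ≤ partialL1 ρ f N :=
  sum_nonneg fun _ _ => abs_nonneg _

theorem partialL1_add_le (f g : ℝ⟦X⟧) (N : ℕ) :
    partialL1 ρ (f + g) N ≤ partialL1 ρ f N + partialL1 ρ g N := by
  rw [partialL1, partialL1, partialL1, ← sum_add_distrib]
  gcongr with n
  rw [map_add, add_mul]
  exact abs_add_le _ _

theorem partialL1_neg (f : ℝ⟦X⟧) (N : ℕ) : partialL1 ρ (-f) N = partialL1 ρ f N := by
  simp [partialL1]

theorem partialL1_smul (c : ℝ) (f : ℝ⟦X⟧) (N : ℕ) :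
    partialL1 ρ (c • f) N = |c| * partialL1 ρ f N := by
  simp [partialL1, mul_sum, abs_mul, mul_assoc]

theorem partialL1_mul_le (f g : ℝ⟦X⟧) (N : ℕ) :
    partialL1 ρ (f * g) N ≤ partialL1 ρ f N * partialL1 ρ g N := by
  set F : ℕ × ℕ → ℝ := fun p => |coeff p.1 f * ρ ^ p.1| * |coeff p.2 g * ρ ^ p.2|
  calc partialL1 ρ (f * g) N ≤ ∑ n ∈ range N, ∑ p ∈ antidiagonal n, F p := by
        refine sum_le_sum fun n _ => ?_
        rw [coeff_mul, sum_mul]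
        refine (abs_sum_le_sum_abs _ _).trans (sum_le_sum fun p hp => le_of_eq ?_)
        rw [← HasAntidiagonal.mem_antidiagonal.1 hp, pow_add]
        simp only [F, ← abs_mul]
        ring_nf
    _ = ∑ p ∈ range N ×ˢ range N with p.1 + p.2 < N, F p := by
        rw [← sum_fiberwise_of_maps_to (g := fun p : ℕ × ℕ => p.1 + p.2) (t := range N)
          (by simp)]
        refine sum_congr rfl fun n hn => sum_congr ?_ fun _ _ => rfl
        ext ⟨i, j⟩
        simp only [mem_range] at hn
        simp only [HasAntidiagonal.mem_antidiagonal, mem_filter, mem_product, mem_range]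
        omega
    _ ≤ ∑ p ∈ range N ×ˢ range N, F p :=
        sum_le_sum_of_subset_of_nonneg (filter_subset _ _) fun p _ _ => by positivity
    _ = partialL1 ρ f N * partialL1 ρ g N := by
        rw [sum_product, partialL1, partialL1, sum_mul_sum]

theorem partialL1_X_mul (f : ℝ⟦X⟧) (N : ℕ) :
    partialL1 ρ (X * f) (N + 1) = |ρ| * partialL1 ρ f N := by
  simp only [partialL1, sum_range_succ', coeff_succ_X_mul, coeff_zero_X_mul, zero_mul, abs_zero,
    add_zero, mul_sum, pow_succ, abs_mul]
  exact sum_congr rfl fun _ _ => by ring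

theorem partialL1_one_le (N : ℕ) : partialL1 ρ 1 N ≤ 1 := by
  cases N with
  | zero => simp [partialL1]
  | succ N => simp [partialL1, sum_range_succ', coeff_one]

theorem partialL1_pow_le (f : ℝ⟦X⟧) (k N : ℕ) :
    partialL1 ρ (f ^ k) N ≤ partialL1 ρ f N ^ k := by
  induction k with
  | zero => simpa using partialL1_one_le N
  | succ k ih =>
    rw [pow_succ, pow_succ]
    exact (partialL1_mul_le _ _ _).trans
      (mul_le_mul_of_nonneg_right ih (partialL1_nonneg f N))

namespace L1Le

variable {f g : ℝ⟦X⟧} {M M₁ M₂ : ℝ}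

theorem nonneg (h : L1Le ρ f M) : 0 ≤ M := (partialL1_nonneg f 0).trans (h 0)

theorem mono (h : L1Le ρ f M₁) (hM : M₁ ≤ M₂) : L1Le ρ f M₂ := fun N => (h N).trans hM

theorem add (hf : L1Le ρ f M₁) (hg : L1Le ρ g M₂) : L1Le ρ (f + g) (M₁ + M₂) :=
  fun N => (partialL1_add_le f g N).trans (add_le_add (hf N) (hg N))

theorem sub (hf : L1Le ρ f M₁) (hg : L1Le ρ g M₂) : L1Le ρ (f - g) (M₁ + M₂) := by
  rw [sub_eq_add_neg]
  exact hf.add fun N => (partialL1_neg g N).trans_le (hg N)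

theorem mul (hf : L1Le ρ f M₁) (hg : L1Le ρ g M₂) : L1Le ρ (f * g) (M₁ * M₂) :=
  fun N => (partialL1_mul_le f g N).trans
    (mul_le_mul (hf N) (hg N) (partialL1_nonneg g N) hf.nonneg)

theorem smul (c : ℝ) (hf : L1Le ρ f M) : L1Le ρ (c • f) (|c| * M) := fun N => by
  rw [partialL1_smul]
  exact mul_le_mul_of_nonneg_left (hf N) (abs_nonneg c)

theorem one : L1Le ρ 1 1 := partialL1_one_le

theorem ofNat (m : ℕ) [m.AtLeastTwo] : L1Le ρ (OfNat.ofNat m) (OfNat.ofNat m) := by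
  have h := (one (ρ := ρ)).smul (OfNat.ofNat m : ℝ)
  rwa [← Algebra.algebraMap_eq_smul_one, map_ofNat, abs_of_nonneg (Nat.ofNat_nonneg _),
    mul_one] at h

theorem X : L1Le ρ X |ρ| := by
  rintro (_ | N)
  · simp [partialL1]
  · rw [← mul_one PowerSeries.X, partialL1_X_mul]
    exact mul_le_of_le_one_right (abs_nonneg ρ) (partialL1_one_le N)

theorem summable (h : L1Le ρ f M) : Summable fun n => |coeff n f * ρ ^ n| :=
  summable_of_sum_range_le (fun _ => abs_nonneg _) h

theorem abs_coeff_mul_pow_le (h : L1Le ρ f M) (n : ℕ) : |coeff n f * ρ ^ n| ≤ M :=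
  (single_le_sum (f := fun n => |coeff n f * ρ ^ n|) (fun _ _ => abs_nonneg _)
    (mem_range.2 n.lt_succ_self)).trans (h (n + 1))

end L1Le

/-- The bound `c` propagates from `N` to `N + 1` coefficients, because the factor `X` makes the
first `N + 1` coefficients of `X * a * f ^ k` depend only on the first `N` coefficients of `f`. -/
theorem L1Le.of_eq_one_add_X_mul {f a : ℝ⟦X⟧} {α c : ℝ} {k : ℕ}
    (hf : f = 1 + PowerSeries.X * a * f ^ k) (ha : L1Le ρ a α)
    (hc : 1 + |ρ| * α * c ^ k ≤ c) (hc0 : 0 ≤ c) : L1Le ρ f c := by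
  intro N
  induction N with
  | zero => simpa [partialL1] using hc0
  | succ N ih =>
    have hfk : partialL1 ρ (f ^ k) N ≤ c ^ k :=
      (partialL1_pow_le f k N).trans (pow_le_pow_left₀ (partialL1_nonneg f N) ih k)
    calc partialL1 ρ f (N + 1)
        ≤ partialL1 ρ 1 (N + 1) + |ρ| * partialL1 ρ (a * f ^ k) N := by
          conv_lhs => rw [hf, mul_assoc]
          rw [← partialL1_X_mul]
          exact partialL1_add_le _ _ _
      _ ≤ 1 + |ρ| * (α * c ^ k) := by
          gcongr
          · exact partialL1_one_le _
          · exact (partialL1_mul_le a _ N).trans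
              (mul_le_mul (ha N) hfk (partialL1_nonneg _ N) ha.nonneg)
      _ ≤ c := by linarith

end WeightedL1

section Evaluation

noncomputable def evalAt (x : ℝ) (f : ℝ⟦X⟧) : ℝ := ∑' n, coeff n f * x ^ n

variable {x ρ M : ℝ} {f g : ℝ⟦X⟧}

theorem norm_coeff_mul_pow_le (f : ℝ⟦X⟧) (n : ℕ) (hx : |x| ≤ |ρ|) :
    ‖coeff n f * x ^ n‖ ≤ |coeff n f * ρ ^ n| := by
  rw [Real.norm_eq_abs, abs_mul, abs_mul, abs_pow, abs_pow]
  gcongr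

def SummableAt (x : ℝ) (f : ℝ⟦X⟧) : Prop := Summable fun n => ‖coeff n f * x ^ n‖

theorem L1Le.summableAt (h : L1Le ρ f M) (hx : |x| ≤ |ρ|) : SummableAt x f :=
  h.summable.of_nonneg_of_le (fun _ => norm_nonneg _) fun n => norm_coeff_mul_pow_le f n hx

theorem L1Le.abs_evalAt_le (h : L1Le ρ f M) (hx : |x| ≤ |ρ|) : |evalAt x f| ≤ M :=
  calc |evalAt x f| ≤ ∑' n, ‖coeff n f * x ^ n‖ := norm_tsum_le_tsum_norm (h.summableAt hx)
    _ ≤ ∑' n, |coeff n f * ρ ^ n| :=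
      (h.summableAt hx).tsum_le_tsum (fun n => norm_coeff_mul_pow_le f n hx) h.summable
    _ ≤ M := h.summable.tsum_le_of_sum_range_le h

theorem coeff_mul_mul_pow (f g : ℝ⟦X⟧) (x : ℝ) (n : ℕ) :
    coeff n (f * g) * x ^ n =
      ∑ p ∈ antidiagonal n, coeff p.1 f * x ^ p.1 * (coeff p.2 g * x ^ p.2) := by
  rw [coeff_mul, sum_mul]
  refine sum_congr rfl fun p hp => ?_
  rw [← HasAntidiagonal.mem_antidiagonal.1 hp, pow_add]
  ring

namespace SummableAt

theorem one : SummableAt x 1 := (L1Le.one (ρ := x)).summableAt le_rfl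

theorem X : SummableAt x X := (L1Le.X (ρ := x)).summableAt le_rfl

theorem ofNat (m : ℕ) [m.AtLeastTwo] : SummableAt x (OfNat.ofNat m) :=
  (L1Le.ofNat (ρ := x) m).summableAt le_rfl

theorem add (hf : SummableAt x f) (hg : SummableAt x g) : SummableAt x (f + g) :=
  (Summable.add hf hg).of_nonneg_of_le (fun _ => norm_nonneg _) fun n => by
    rw [map_add, add_mul]
    exact norm_add_le _ _

theorem smul (c : ℝ) (hf : SummableAt x f) : SummableAt x (c • f) := by
  simpa [SummableAt, mul_assoc] using Summable.mul_left ‖c‖ hf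

theorem sub (hf : SummableAt x f) (hg : SummableAt x g) : SummableAt x (f - g) := by
  simpa [sub_eq_add_neg] using hf.add (hg.smul (-1))

theorem mul (hf : SummableAt x f) (hg : SummableAt x g) : SummableAt x (f * g) := by
  simpa only [SummableAt, coeff_mul_mul_pow] using
    summable_norm_sum_mul_antidiagonal_of_summable_norm hf hg

theorem pow (hf : SummableAt x f) (k : ℕ) : SummableAt x (f ^ k) := by
  induction k with
  | zero => simpa using one
  | succ k ih => simpa [pow_succ] using ih.mul hf

end SummableAt

theorem evalAt_add (hf : SummableAt x f) (hg : SummableAt x g) :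
    evalAt x (f + g) = evalAt x f + evalAt x g := by
  simp only [evalAt, map_add, add_mul]
  exact hf.of_norm.tsum_add hg.of_norm

theorem evalAt_sub (hf : SummableAt x f) (hg : SummableAt x g) :
    evalAt x (f - g) = evalAt x f - evalAt x g := by
  simp only [evalAt, map_sub, sub_mul]
  exact hf.of_norm.tsum_sub hg.of_norm

theorem evalAt_mul (hf : SummableAt x f) (hg : SummableAt x g) :
    evalAt x (f * g) = evalAt x f * evalAt x g := by
  simp only [evalAt, tsum_mul_tsum_eq_tsum_sum_antidiagonal_of_summable_norm hf hg,
    coeff_mul_mul_pow]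

theorem evalAt_smul (c : ℝ) (f : ℝ⟦X⟧) : evalAt x (c • f) = c * evalAt x f := by
  simp only [evalAt, coeff_smul, smul_eq_mul, mul_assoc, tsum_mul_left]

theorem evalAt_one : evalAt x 1 = 1 := by
  rw [evalAt, tsum_eq_single 0 fun n hn => by simp [coeff_one, hn]]
  simp

theorem evalAt_ofNat (m : ℕ) [m.AtLeastTwo] : evalAt x (OfNat.ofNat m) = OfNat.ofNat m := by
  rw [← map_ofNat (algebraMap ℝ ℝ⟦X⟧) m, Algebra.algebraMap_eq_smul_one, evalAt_smul, evalAt_one,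
    mul_one]

theorem evalAt_X : evalAt x X = x := by
  rw [evalAt, tsum_eq_single 1 fun n hn => by simp [coeff_X, hn]]
  simp

theorem evalAt_pow (hf : SummableAt x f) (k : ℕ) : evalAt x (f ^ k) = evalAt x f ^ k := by
  induction k with
  | zero => simp [evalAt_one]
  | succ k ih => rw [pow_succ, evalAt_mul (hf.pow k) hf, ih, pow_succ]

theorem evalAt_eq_one_add_X_mul {a : ℝ⟦X⟧} {k : ℕ} (hf : f = 1 + X * a * f ^ k)
    (hfx : SummableAt x f) (hax : SummableAt x a) :
    evalAt x f = 1 + x * evalAt x a * evalAt x f ^ k := by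
  conv_lhs => rw [hf]
  rw [evalAt_add SummableAt.one ((SummableAt.X.mul hax).mul (hfx.pow k)), evalAt_one,
    evalAt_mul (SummableAt.X.mul hax) (hfx.pow k), evalAt_mul SummableAt.X hax, evalAt_X,
    evalAt_pow hfx]

end Evaluation

section Transfer

variable {w b v : ℕ → ℝ} {x α c : ℝ}

theorem summable_add_one_pow_mul_geometric {t : ℝ} (ht0 : 0 ≤ t) (ht : t < 1) (k : ℕ) :
    Summable fun n : ℕ => ((n : ℝ) + 1) ^ k * t ^ n := by
  have hle : ∀ n : ℕ, ((n : ℝ) + 1) ^ k ≤ 2 ^ k * (n : ℝ) ^ k + 1 := by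
    rintro (_ | n)
    · simp only [CharP.cast_eq_zero, zero_add, one_pow, le_add_iff_nonneg_left]
      positivity
    · calc (((n + 1 : ℕ) : ℝ) + 1) ^ k ≤ (2 * ((n + 1 : ℕ) : ℝ)) ^ k :=
            pow_le_pow_left₀ (by positivity) (by push_cast; linarith) k
        _ ≤ 2 ^ k * ((n + 1 : ℕ) : ℝ) ^ k + 1 := by rw [mul_pow]; linarith
  refine Summable.of_nonneg_of_le (fun n => by positivity)
    (fun n => mul_le_mul_of_nonneg_right (hle n) (pow_nonneg ht0 n)) ?_
  simpa only [add_mul, mul_assoc, one_mul] using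
    ((summable_pow_mul_geometric_of_norm_lt_one (R := ℝ) k (r := t)
      (by rwa [Real.norm_eq_abs, abs_of_nonneg ht0])).mul_left _).add
      (summable_geometric_of_lt_one ht0 ht)

theorem add_one_rpow_le_pow_ceil (n : ℕ) (α : ℝ) :
    ((n : ℝ) + 1) ^ α ≤ ((n : ℝ) + 1) ^ ⌈α⌉₊ := by
  rw [← Real.rpow_natCast]
  exact Real.rpow_le_rpow_of_exponent_le (by linarith [n.cast_nonneg (α := ℝ)]) (Nat.le_ceil α)

theorem L1Le.summable_abs_mul_rpow {ρ M : ℝ} {f : ℝ⟦X⟧} (h : L1Le ρ f M) (hx : |x| < |ρ|)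
    (α : ℝ) : Summable fun n => |coeff n f * x ^ n| * ((n : ℝ) + 1) ^ α := by
  have hρ : 0 < |ρ| := (abs_nonneg x).trans_lt hx
  have hbound : ∀ n, |coeff n f * x ^ n| * ((n : ℝ) + 1) ^ α
      ≤ M * (((n : ℝ) + 1) ^ ⌈α⌉₊ * (|x| / |ρ|) ^ n) := fun n => by
    have hsplit : |coeff n f * x ^ n| = |coeff n f * ρ ^ n| * (|x| / |ρ|) ^ n := by
      rw [div_pow, abs_mul, abs_mul, abs_pow, abs_pow]
      field_simp
    rw [hsplit]
    calc |coeff n f * ρ ^ n| * (|x| / |ρ|) ^ n * ((n : ℝ) + 1) ^ α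
        ≤ M * (|x| / |ρ|) ^ n * ((n : ℝ) + 1) ^ ⌈α⌉₊ :=
          mul_le_mul (mul_le_mul_of_nonneg_right (h.abs_coeff_mul_pow_le n) (by positivity))
            (add_one_rpow_le_pow_ceil n α) (by positivity) (mul_nonneg h.nonneg (by positivity))
      _ = _ := by ring
  exact Summable.of_nonneg_of_le (fun n => by positivity) hbound
    ((summable_add_one_pow_mul_geometric (by positivity) ((div_lt_one hρ).2 hx) _).mul_left M)

theorem tendsto_mul_add_rpow_mul_pow (hα : 0 ≤ α)
    (hb : Tendsto (fun m : ℕ => b m * (m : ℝ) ^ α * x ^ m) atTop (𝓝 c)) (j : ℕ) :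
    Tendsto (fun m : ℕ => b m * ((m : ℝ) + j) ^ α * x ^ m) atTop (𝓝 c) := by
  have hratio : Tendsto (fun m : ℕ => (((m : ℝ) + j) / m) ^ α) atTop (𝓝 1) := by
    have h := ((tendsto_natCast_div_add_atTop (j : ℝ)).inv₀ one_ne_zero).rpow_const (Or.inr hα)
    simpa only [inv_div, inv_one, Real.one_rpow] using h
  refine (mul_one c ▸ hb.mul hratio).congr' ?_
  filter_upwards [eventually_gt_atTop 0] with m hm
  have hm' : (0 : ℝ) < m := Nat.cast_pos.2 hm
  rw [Real.div_rpow (by positivity) hm'.le]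
  field_simp

theorem sum_antidiagonal_mul_rpow_mul_pow_eq_tsum (n : ℕ) :
    (∑ p ∈ antidiagonal n, w p.1 * b p.2) * (n : ℝ) ^ α * x ^ n =
      ∑' j, if j ≤ n then w j * x ^ j * (b (n - j) * (n : ℝ) ^ α * x ^ (n - j)) else 0 := by
  rw [tsum_eq_sum (s := range (n + 1)) fun j hj => if_neg (by simpa using hj),
    Nat.sum_antidiagonal_eq_sum_range_succ_mk, sum_mul, sum_mul]
  refine sum_congr rfl fun j hj => ?_
  have hjn : j ≤ n := Nat.lt_succ_iff.1 (mem_range.1 hj)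
  rw [if_pos hjn, show x ^ n = x ^ j * x ^ (n - j) by rw [← pow_add, Nat.add_sub_cancel' hjn]]
  ring

theorem abs_mul_mul_natCast_add_rpow_le (hα : 0 ≤ α) (j m : ℕ) :
    |w j * x ^ j * (b m * ((j + m : ℕ) : ℝ) ^ α * x ^ m)| ≤
      |b m * ((m : ℝ) + 1) ^ α * x ^ m| * (|w j * x ^ j| * ((j : ℝ) + 1) ^ α) := by
  have hpow : ((j + m : ℕ) : ℝ) ^ α ≤ ((m : ℝ) + 1) ^ α * ((j : ℝ) + 1) ^ α := by
    rw [← Real.mul_rpow (by positivity) (by positivity)]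
    refine Real.rpow_le_rpow (by positivity) ?_ hα
    push_cast
    nlinarith [j.cast_nonneg (α := ℝ), m.cast_nonneg (α := ℝ)]
  calc |w j * x ^ j * (b m * ((j + m : ℕ) : ℝ) ^ α * x ^ m)|
      = |w j * x ^ j| * (|b m * x ^ m| * ((j + m : ℕ) : ℝ) ^ α) := by
        simp only [abs_mul, abs_of_nonneg (Real.rpow_nonneg (Nat.cast_nonneg (j + m)) α)]
        ring
    _ ≤ |w j * x ^ j| * (|b m * x ^ m| * (((m : ℝ) + 1) ^ α * ((j : ℝ) + 1) ^ α)) := by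
        gcongr
    _ = |b m * ((m : ℝ) + 1) ^ α * x ^ m| * (|w j * x ^ j| * ((j : ℝ) + 1) ^ α) := by
        simp only [abs_mul, abs_of_nonneg (by positivity : (0 : ℝ) ≤ ((m : ℝ) + 1) ^ α)]
        ring

theorem tendsto_sum_antidiagonal_mul_rpow_mul_pow (hα : 0 ≤ α)
    (hb : Tendsto (fun m : ℕ => b m * (m : ℝ) ^ α * x ^ m) atTop (𝓝 c))
    (hw : Summable fun j : ℕ => |w j * x ^ j| * ((j : ℝ) + 1) ^ α) :
    Tendsto (fun n : ℕ => (∑ p ∈ antidiagonal n, w p.1 * b p.2) * (n : ℝ) ^ α * x ^ n) atTop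
      (𝓝 (c * ∑' j, w j * x ^ j)) := by
  obtain ⟨K, hK⟩ : ∃ K, ∀ m : ℕ, |b m * ((m : ℝ) + 1) ^ α * x ^ m| ≤ K := by
    obtain ⟨K, hK⟩ := (tendsto_mul_add_rpow_mul_pow hα hb 1).abs.bddAbove_range
    exact ⟨K, fun m => hK ⟨m, by simp⟩⟩
  set F : ℕ → ℕ → ℝ := fun n j =>
    if j ≤ n then w j * x ^ j * (b (n - j) * (n : ℝ) ^ α * x ^ (n - j)) else 0
  have hF : ∀ n, (∑ p ∈ antidiagonal n, w p.1 * b p.2) * (n : ℝ) ^ α * x ^ n = ∑' j, F n j :=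
    sum_antidiagonal_mul_rpow_mul_pow_eq_tsum
  have hlim : ∀ j, Tendsto (fun n => F n j) atTop (𝓝 (w j * x ^ j * c)) := by
    intro j
    refine (((tendsto_mul_add_rpow_mul_pow hα hb j).comp (tendsto_sub_atTop_nat j)).const_mul
      (w j * x ^ j)).congr' ?_
    filter_upwards [eventually_ge_atTop j] with n hn
    simp only [F, if_pos hn, Function.comp, Nat.cast_sub hn, sub_add_cancel]
  have hdom : ∀ n j, ‖F n j‖ ≤ K * (|w j * x ^ j| * ((j : ℝ) + 1) ^ α) := by
    intro n j
    by_cases hjn : j ≤ n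
    · obtain ⟨m, rfl⟩ := Nat.exists_eq_add_of_le hjn
      simp only [F, if_pos hjn, Nat.add_sub_cancel_left, Real.norm_eq_abs]
      exact (abs_mul_mul_natCast_add_rpow_le hα j m).trans (by gcongr; exact hK m)
    · simp only [F, if_neg hjn, norm_zero]
      exact mul_nonneg ((abs_nonneg _).trans (hK 0)) (by positivity)
  have h := tendsto_tsum_of_dominated_convergence (hw.mul_left K) hlim
    (Eventually.of_forall hdom)
  rw [tsum_mul_right, mul_comm] at h
  simpa only [hF] using h

theorem tendsto_mul_rpow_mul_pow_zero (hα : 0 ≤ α)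
    (hv : Summable fun n : ℕ => |v n * x ^ n| * ((n : ℝ) + 1) ^ α) :
    Tendsto (fun n : ℕ => v n * (n : ℝ) ^ α * x ^ n) atTop (𝓝 0) := by
  refine squeeze_zero_norm (fun n => ?_) hv.tendsto_atTop_zero
  rw [Real.norm_eq_abs, mul_right_comm, abs_mul,
    abs_of_nonneg (Real.rpow_nonneg (Nat.cast_nonneg n) α)]
  gcongr
  linarith

end Transfer

open Nat in
theorem centralBinom_sq_mul_wallis (n : ℕ) :
    (n.centralBinom : ℝ) ^ 2 * (Real.Wallis.W n * (2 * n + 1)) = 16 ^ n := by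
  have hc : (n.centralBinom : ℝ) * n ! * n ! = (2 * n)! := by
    have h := Nat.choose_mul_factorial_mul_factorial (show n ≤ 2 * n by omega)
    rw [show 2 * n - n = n by omega, ← Nat.centralBinom_eq_two_mul_choose] at h
    exact_mod_cast h
  rw [Real.Wallis.W_eq_factorial_ratio, ← hc]
  have : (0 : ℝ) < n.centralBinom := by exact_mod_cast n.centralBinom_pos
  field_simp
  rw [pow_mul]
  norm_num

theorem tendsto_centralBinom_mul_sqrt_div_four_pow :
    Tendsto (fun n : ℕ => (n.centralBinom : ℝ) * √n / 4 ^ n) atTop (𝓝 (√π)⁻¹) := by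
  have h := (Stirling.tendsto_self_div_two_mul_self_add_one.div
    Real.Wallis.tendsto_W_nhds_pi_div_two (by positivity)).sqrt
  rw [show (1 / 2 : ℝ) / (π / 2) = π⁻¹ by field_simp, Real.sqrt_inv] at h
  refine h.congr fun n => ?_
  have hW := Real.Wallis.W_pos n
  have key := centralBinom_sq_mul_wallis n
  rw [← Real.sqrt_sq (by positivity : (0 : ℝ) ≤ n.centralBinom * √n / 4 ^ n)]
  congr 1
  change (n : ℝ) / (2 * n + 1) / Real.Wallis.W n = _
  rw [div_pow, mul_pow, Real.sq_sqrt (Nat.cast_nonneg n), ← pow_mul, mul_comm n 2, pow_mul]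
  field_simp
  linear_combination (-n : ℝ) * key

theorem tendsto_catalan_mul_rpow_mul_pow :
    Tendsto (fun n : ℕ => (catalan n : ℝ) * (n : ℝ) ^ (3 / 2 : ℝ) * (1 / 4) ^ n) atTop
      (𝓝 (√π)⁻¹) := by
  have h :=
    tendsto_centralBinom_mul_sqrt_div_four_pow.mul (tendsto_natCast_div_add_atTop (1 : ℝ))
  rw [mul_one] at h
  refine h.congr fun n => ?_
  have hcat : ((n : ℝ) + 1) * catalan n = n.centralBinom := by
    exact_mod_cast succ_mul_catalan_eq_centralBinom n
  rw [show (3 / 2 : ℝ) = 1 + 1 / 2 by norm_num, Real.rpow_add' (Nat.cast_nonneg n) (by norm_num),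
    Real.rpow_one, ← Real.sqrt_eq_rpow, ← hcat, div_pow, one_pow]
  field_simp


namespace ENT

noncomputable def D : ℝ⟦X⟧ := PScomp Cgf (X * Cgf ^ 2)

noncomputable def g : ℝ⟦X⟧ := (16⁻¹ : ℝ) • (5 + 4 * Cgf)

noncomputable def u : ℝ⟦X⟧ := X * g

noncomputable def S : ℝ⟦X⟧ := Cgf.subst u

noncomputable def R : ℝ⟦X⟧ := rescale (25 / 16 : ℝ) Cgf

noncomputable def G : ℝ⟦X⟧ := (1 - 4 * u)⁻¹

/-- `P = C⁻¹ · (1 - 4u)^(-1/2) · (B + 1)`, since `1 - 2uS = √(1 - 4u)` and `G = (1 - 4u)⁻¹`. -/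
noncomputable def P : ℝ⟦X⟧ := (1 - X * Cgf) * (1 - 2 * u * S) * G * (Bgf + 1)

noncomputable def W : ℝ⟦X⟧ := (25 / 32 : ℝ) • P

noncomputable def V : ℝ⟦X⟧ := (2⁻¹ : ℝ) • (P * g * S)

theorem S_eq : S = 1 + u * S ^ 2 := subst_Cgf_eq (by simp [u])

theorem R_eq : R = 1 + (25 / 16 : ℝ) • X * R ^ 2 := by
  conv_lhs => rw [R, Cgf_eq]
  rw [map_add, map_one, map_mul, map_pow, rescale_X, ← smul_eq_C_mul, R]

theorem coeff_R (n : ℕ) : coeff n R = (25 / 16 : ℝ) ^ n * catalan n := by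
  simp [R, coeff_rescale, Cgf]

theorem one_sub_four_mul_u_mul_G : (1 - 4 * u) * G = 1 :=
  PowerSeries.mul_inv_cancel _ (by simp [u])

theorem D_eq : D = 1 + X * Cgf ^ 2 * D ^ 2 := by
  rw [D, PScomp_eq_subst (by simp)]
  exact subst_Cgf_eq (by simp)

/-- `√(5 - 4C) · √(1 - 4u) = √(1 - 25z/4)`, each square root written as `1 - 2aF` with
`F = 1 + aF²`. -/
theorem sqrt_mul_sqrt :
    (1 - 2 * (X * Cgf ^ 2) * D) * (1 - 2 * u * S) =
      1 - 2 * ((25 / 16 : ℝ) • X) * R := by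
  refine eq_of_sq_eq_of_constantCoeff_eq_one ?_ (by simp [u]) (by simp)
  rw [mul_pow, one_sub_two_mul_mul_sq D_eq, one_sub_two_mul_mul_sq S_eq,
    one_sub_two_mul_mul_sq R_eq, u, g]
  linear_combination (norm := algebra) (-5 * X - 4 * X * Cgf) * Cgf_eq

theorem TM_eq : TM = W * R - V := by
  set q := 1 - 2 * u * S
  set r := 1 - 2 * ((25 / 16 : ℝ) • X) * R
  have hTM : TM = Bgf * D := rfl
  have hD : 2 * (X * Cgf ^ 2) * q * TM = Bgf * (q - r) := by
    rw [hTM]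
    linear_combination (-Bgf) * sqrt_mul_sqrt
  have hC : 4 * (X * Cgf) * q * TM = (Bgf + 1) * (q - r) := by
    linear_combination 2 * (1 - X * Cgf) * hD
      - 4 * X * Cgf * q * TM * Cgf_mul_one_sub_X_mul_Cgf
      - (q - r) * ((1 - X * Cgf) * Bgf_add_one_mul_Cgf - (Bgf + 1) * Cgf_mul_one_sub_X_mul_Cgf)
  have hqr : q - r = X * ((25 / 8 : ℝ) • R - 2 * g * S) := by
    simp only [q, r, u]
    algebra
  have hX : 4 * Cgf * q * TM = (Bgf + 1) * ((25 / 8 : ℝ) • R - 2 * g * S) := by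
    refine mul_left_cancel₀ (X_ne_zero (R := ℝ)) ?_
    linear_combination hC + (Bgf + 1) * hqr
  have hq : q ^ 2 = 1 - 4 * u := one_sub_two_mul_mul_sq S_eq
  have h4TM : 4 * TM = P * ((25 / 8 : ℝ) • R - 2 * g * S) := by
    simp only [P]
    linear_combination (1 - X * Cgf) * q * G * hX
      - 4 * TM * q ^ 2 * G * Cgf_mul_one_sub_X_mul_Cgf - 4 * TM * G * hq
      - 4 * TM * one_sub_four_mul_u_mul_G
  rw [W, V]
  linear_combination (norm := algebra) (4⁻¹ : ℝ) • h4TM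

theorem L1Le_Cgf : L1Le (1 / 5) Cgf (3 / 2) :=
  L1Le.of_eq_one_add_X_mul (a := 1) (k := 2) (by rw [mul_one]; exact Cgf_eq) L1Le.one
    (by norm_num) (by norm_num)

theorem L1Le_Bgf : L1Le (1 / 5) Bgf (5 / 2) :=
  L1Le.of_eq_one_add_X_mul (k := 1) (by rw [pow_one]; exact Bgf_eq)
    ((L1Le.ofNat 2).mul L1Le_Cgf) (by norm_num) (by norm_num)

theorem L1Le_g : L1Le (1 / 5) g (11 / 16) :=
  (((L1Le.ofNat 5).add ((L1Le.ofNat 4).mul L1Le_Cgf)).smul _).mono (by norm_num)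

theorem L1Le_S : L1Le (1 / 5) S 2 :=
  L1Le.of_eq_one_add_X_mul S_eq L1Le_g (by norm_num) (by norm_num)

theorem G_eq : G = 1 + X * (4 * g) * G ^ 1 := by
  have hG : (1 - 4 * (X * g)) * G = 1 := one_sub_four_mul_u_mul_G
  linear_combination hG

theorem L1Le_G : L1Le (1 / 5) G 3 :=
  L1Le.of_eq_one_add_X_mul G_eq ((L1Le.ofNat 4).mul L1Le_g) (by norm_num) (by norm_num)

theorem exists_L1Le_P : ∃ M, L1Le (1 / 5) P M :=
  ⟨_, (((L1Le.one.sub (L1Le.X.mul L1Le_Cgf)).mul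
    (L1Le.one.sub (((L1Le.ofNat 2).mul (L1Le.X.mul L1Le_g)).mul L1Le_S))).mul L1Le_G).mul
    (L1Le_Bgf.add L1Le.one)⟩

theorem summable_W :
    Summable fun j : ℕ => |coeff j W * (4 / 25) ^ j| * ((j : ℝ) + 1) ^ (3 / 2 : ℝ) := by
  obtain ⟨M, hP⟩ := exists_L1Le_P
  exact (hP.smul _).summable_abs_mul_rpow (by norm_num) _

theorem summable_V :
    Summable fun j : ℕ => |coeff j V * (4 / 25) ^ j| * ((j : ℝ) + 1) ^ (3 / 2 : ℝ) := by
  obtain ⟨M, hP⟩ := exists_L1Le_P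
  exact (((hP.mul L1Le_g).mul L1Le_S).smul _).summable_abs_mul_rpow (by norm_num) _

theorem summableAt_Cgf : SummableAt (4 / 25) Cgf := L1Le_Cgf.summableAt (by norm_num)

theorem summableAt_Bgf : SummableAt (4 / 25) Bgf := L1Le_Bgf.summableAt (by norm_num)

theorem summableAt_g : SummableAt (4 / 25) g := L1Le_g.summableAt (by norm_num)

theorem summableAt_S : SummableAt (4 / 25) S := L1Le_S.summableAt (by norm_num)

theorem summableAt_G : SummableAt (4 / 25) G := L1Le_G.summableAt (by norm_num)

theorem evalAt_Cgf : evalAt (4 / 25) Cgf = 5 / 4 := by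
  have e := evalAt_eq_one_add_X_mul (a := 1) (k := 2) (by rw [mul_one]; exact Cgf_eq)
    summableAt_Cgf SummableAt.one
  rw [evalAt_one] at e
  have hb := (abs_le.1 (L1Le_Cgf.abs_evalAt_le (x := 4 / 25) (by norm_num))).2
  have hroots : (evalAt (4 / 25) Cgf - 5 / 4) * (evalAt (4 / 25) Cgf - 5) = 0 := by
    linear_combination (-25 / 4) * e
  rcases mul_eq_zero.1 hroots with hr | hr <;> linarith

theorem evalAt_Bgf : evalAt (4 / 25) Bgf = 5 / 3 := by
  have e := evalAt_eq_one_add_X_mul (k := 1) (by rw [pow_one]; exact Bgf_eq) summableAt_Bgf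
    ((SummableAt.ofNat 2).mul summableAt_Cgf)
  rw [evalAt_mul (SummableAt.ofNat 2) summableAt_Cgf, evalAt_ofNat, evalAt_Cgf, pow_one] at e
  linarith

theorem evalAt_g : evalAt (4 / 25) g = 5 / 8 := by
  rw [g, evalAt_smul, evalAt_add (SummableAt.ofNat 5) ((SummableAt.ofNat 4).mul summableAt_Cgf),
    evalAt_mul (SummableAt.ofNat 4) summableAt_Cgf, evalAt_ofNat, evalAt_ofNat, evalAt_Cgf]
  norm_num

theorem evalAt_S : evalAt (4 / 25) S = 5 - √15 := by
  have e := evalAt_eq_one_add_X_mul S_eq summableAt_S summableAt_g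
  rw [evalAt_g] at e
  have hb := (abs_le.1 (L1Le_S.abs_evalAt_le (x := 4 / 25) (by norm_num))).2
  have h15 : √15 ^ 2 = 15 := Real.sq_sqrt (by norm_num)
  have hroots : (evalAt (4 / 25) S - (5 - √15)) * (evalAt (4 / 25) S - (5 + √15)) = 0 := by
    linear_combination (-10) * e - h15
  rcases mul_eq_zero.1 hroots with hr | hr
  · linarith
  · linarith [Real.sqrt_nonneg 15]

theorem evalAt_G : evalAt (4 / 25) G = 5 / 3 := by
  have e := evalAt_eq_one_add_X_mul G_eq summableAt_G ((SummableAt.ofNat 4).mul summableAt_g)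
  rw [evalAt_mul (SummableAt.ofNat 4) summableAt_g, evalAt_ofNat, evalAt_g, pow_one] at e
  linarith

theorem evalAt_sqrt_one_sub_four_mul_u : evalAt (4 / 25) (1 - 2 * u * S) = √15 / 5 := by
  have hu : SummableAt (4 / 25) u := SummableAt.X.mul summableAt_g
  rw [evalAt_sub SummableAt.one (((SummableAt.ofNat 2).mul hu).mul summableAt_S),
    evalAt_mul ((SummableAt.ofNat 2).mul hu) summableAt_S, evalAt_mul (SummableAt.ofNat 2) hu, u,
    evalAt_mul SummableAt.X summableAt_g, evalAt_one, evalAt_ofNat, evalAt_X, evalAt_g, evalAt_S]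
  ring

theorem evalAt_W : evalAt (4 / 25) W = 5 * √15 / 9 := by
  have hXC := SummableAt.one.sub (SummableAt.X.mul summableAt_Cgf)
  have hq : SummableAt (4 / 25) (1 - 2 * u * S) :=
    SummableAt.one.sub
      (((SummableAt.ofNat 2).mul (SummableAt.X.mul summableAt_g)).mul summableAt_S)
  rw [W, P, evalAt_smul,
    evalAt_mul ((hXC.mul hq).mul summableAt_G) (summableAt_Bgf.add SummableAt.one),
    evalAt_mul (hXC.mul hq) summableAt_G, evalAt_mul hXC hq,
    evalAt_sub SummableAt.one (SummableAt.X.mul summableAt_Cgf),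
    evalAt_mul SummableAt.X summableAt_Cgf, evalAt_add summableAt_Bgf SummableAt.one,
    evalAt_sqrt_one_sub_four_mul_u, evalAt_one, evalAt_X, evalAt_Cgf, evalAt_G, evalAt_Bgf]
  ring

theorem tendsto_coeff_R :
    Tendsto (fun m : ℕ => coeff m R * (m : ℝ) ^ (3 / 2 : ℝ) * (4 / 25) ^ m) atTop
      (𝓝 (√π)⁻¹) := by
  refine tendsto_catalan_mul_rpow_mul_pow.congr fun m => ?_
  rw [coeff_R, show (1 / 4 : ℝ) = 25 / 16 * (4 / 25) by norm_num, mul_pow]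
  ring

end ENT

theorem sqrt_pi_mul_pow_three_div (n : ℕ) :
    √(π * (n : ℝ) ^ 3) / (25 / 4 : ℝ) ^ n = √π * ((n : ℝ) ^ (3 / 2 : ℝ) * (4 / 25) ^ n) := by
  have hsqrt : √((n : ℝ) ^ 3) = (n : ℝ) ^ (3 / 2 : ℝ) := by
    rw [Real.sqrt_eq_rpow, ← Real.rpow_natCast, ← Real.rpow_mul (Nat.cast_nonneg n)]
    norm_num
  rw [Real.sqrt_mul pi_nonneg, hsqrt, div_eq_mul_inv, ← inv_pow]
  norm_num
  ring

/-- The coefficients `aₙ = [zⁿ]T_M` satisfy `aₙ ∼ (5√15/9)·(1/√(π n³))·(25/4)ⁿ`. -/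
theorem stmt9 :
    Tendsto
      (fun n : ℕ =>
        PowerSeries.coeff (R := ℝ) n TM * Real.sqrt (Real.pi * (n : ℝ) ^ 3) / (25 / 4 : ℝ) ^ n)
      atTop (nhds (5 * Real.sqrt 15 / 9)) := by
  have hW : ∑' j, coeff j ENT.W * (4 / 25 : ℝ) ^ j = 5 * √15 / 9 := ENT.evalAt_W
  have hlim := ((tendsto_sum_antidiagonal_mul_rpow_mul_pow (by norm_num) ENT.tendsto_coeff_R
    ENT.summable_W).sub (tendsto_mul_rpow_mul_pow_zero (by norm_num) ENT.summable_V)).const_mul √π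
  rw [hW, sub_zero, ← mul_assoc, mul_inv_cancel₀ (by positivity), one_mul] at hlim
  refine hlim.congr fun n => ?_
  rw [mul_div_assoc, sqrt_pi_mul_pow_three_div, ENT.TM_eq, map_sub, coeff_mul]
  ring
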